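/- arXiv:2604.23847 — 3 statements merged into one kernel-verified Lean document; each statement's English description precedes it below -/
import Mathlib

section
/- Let H be a real inner product space and g₁,…,g_K ∈ H with K ≥ 2. Suppose a := min_{i≠j} ‖gᵢ - gⱼ‖ and b := max_{i≠j} |‖gᵢ‖ - ‖gⱼ‖|. Then for any weights π ∈ Δ_{K-1} on the probability simplex, setting L := Σ_k π_k ‖g_k‖, we have ‖Σ_k π_k g_k‖² ≤ L² - ((a² - b²)/2) · Σ_k π_k(1 - π_k). -/
/-!
Expanding both squares, `L² - ‖∑ πₖ gₖ‖² = ∑ᵢ ∑ⱼ πᵢ πⱼ (‖gᵢ‖ ‖gⱼ‖ - ⟪gᵢ, gⱼ⟫)`. The diagonal terms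
vanish, and by the polarization identity each off-diagonal term is
`(‖gᵢ - gⱼ‖² - (‖gᵢ‖ - ‖gⱼ‖)²) / 2 ≥ (a² - b²) / 2`. Finally `∑_{j ≠ i} πⱼ = 1 - πᵢ`.
-/

open Finset

section InnerProduct

variable {H : Type*} [NormedAddCommGroup H] [InnerProductSpace ℝ H]

lemma norm_mul_norm_sub_inner_eq (x y : H) :
    ‖x‖ * ‖y‖ - inner ℝ x y = (‖x - y‖ ^ 2 - (‖x‖ - ‖y‖) ^ 2) / 2 := by
  rw [norm_sub_sq_real]
  ring

lemma div_two_le_norm_mul_norm_sub_inner {x y : H} {a b : ℝ} (ha : 0 ≤ a)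
    (hxy : a ≤ ‖x - y‖) (hb : |‖x‖ - ‖y‖| ≤ b) :
    (a ^ 2 - b ^ 2) / 2 ≤ ‖x‖ * ‖y‖ - inner ℝ x y := by
  rw [norm_mul_norm_sub_inner_eq]
  have hsq_a : a ^ 2 ≤ ‖x - y‖ ^ 2 := pow_le_pow_left₀ ha hxy 2
  have hsq_b : (‖x‖ - ‖y‖) ^ 2 ≤ b ^ 2 := sq_le_sq' (abs_le.mp hb).1 (abs_le.mp hb).2
  linarith

lemma sq_sum_mul_norm_sub_norm_sum_smul_sq {ι : Type*} [Fintype ι] (w : ι → ℝ) (g : ι → H) :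
    (∑ k, w k * ‖g k‖) ^ 2 - ‖∑ k, w k • g k‖ ^ 2
      = ∑ i, ∑ j, w i * w j * (‖g i‖ * ‖g j‖ - inner ℝ (g i) (g j)) := by
  rw [← real_inner_self_eq_norm_sq, sq, sum_mul_sum, sum_inner, ← sum_sub_distrib]
  refine sum_congr rfl fun i _ => ?_
  rw [inner_sum, ← sum_sub_distrib]
  refine sum_congr rfl fun j _ => ?_
  rw [real_inner_smul_left, real_inner_smul_right]
  ring

end InnerProduct

lemma mul_sum_mul_one_sub_le_sum_sum {ι : Type*} [Fintype ι] [DecidableEq ι]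
    {w : ι → ℝ} (hw0 : ∀ k, 0 ≤ w k) (hw1 : ∑ k, w k = 1) {D : ι → ι → ℝ} {c : ℝ}
    (hdiag : ∀ i, D i i = 0) (hoff : ∀ i j, i ≠ j → c ≤ D i j) :
    c * ∑ i, w i * (1 - w i) ≤ ∑ i, ∑ j, w i * w j * D i j := by
  rw [mul_sum]
  refine sum_le_sum fun i _ => ?_
  have hrest : ∑ j ∈ univ.erase i, w j = 1 - w i := by
    rw [sum_erase_eq_sub (mem_univ i), hw1]
  calc c * (w i * (1 - w i)) = w i * ∑ j ∈ univ.erase i, w j * c := by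
        rw [← sum_mul, hrest]; ring
    _ ≤ w i * ∑ j ∈ univ.erase i, w j * D i j := by
        refine mul_le_mul_of_nonneg_left (sum_le_sum fun j hj => ?_) (hw0 i)
        exact mul_le_mul_of_nonneg_left (hoff i j (ne_of_mem_erase hj).symm) (hw0 j)
    _ = ∑ j, w i * w j * D i j := by
        rw [sum_erase _ (by simp [hdiag]), mul_sum]
        simp only [mul_assoc]

theorem stmt1_general {H : Type*} [NormedAddCommGroup H] [InnerProductSpace ℝ H]
    {K : ℕ} (g : Fin K → H)
    (hne : (Finset.univ.filter fun p : Fin K × Fin K => p.1 ≠ p.2).Nonempty)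
    (a b : ℝ)
    (ha : a = (Finset.univ.filter fun p : Fin K × Fin K => p.1 ≠ p.2).inf' hne
        fun p => ‖g p.1 - g p.2‖)
    (hb : b = (Finset.univ.filter fun p : Fin K × Fin K => p.1 ≠ p.2).sup' hne
        fun p => |‖g p.1‖ - ‖g p.2‖|)
    (π : Fin K → ℝ) (hπ0 : ∀ k, 0 ≤ π k) (hπ1 : ∑ k, π k = 1)
    (L : ℝ) (hL : L = ∑ k, π k * ‖g k‖) :
    ‖∑ k, π k • g k‖ ^ 2 ≤ L ^ 2 - ((a ^ 2 - b ^ 2) / 2) * ∑ k, π k * (1 - π k) := by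
  have ha0 : 0 ≤ a := ha ▸ le_inf' hne _ fun p _ => norm_nonneg _
  have hoff : ∀ i j, i ≠ j → (a ^ 2 - b ^ 2) / 2 ≤ ‖g i‖ * ‖g j‖ - inner ℝ (g i) (g j) :=
    fun i j hij =>
      have hij' : (i, j) ∈ univ.filter fun p : Fin K × Fin K => p.1 ≠ p.2 := by simp [hij]
      div_two_le_norm_mul_norm_sub_inner ha0 (ha ▸ inf'_le _ hij')
        (hb ▸ le_sup' (fun p : Fin K × Fin K => |‖g p.1‖ - ‖g p.2‖|) hij')
  have hdiag : ∀ i, ‖g i‖ * ‖g i‖ - inner ℝ (g i) (g i) = 0 := fun i => by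
    rw [real_inner_self_eq_norm_mul_norm, sub_self]
  have hbound := mul_sum_mul_one_sub_le_sum_sum hπ0 hπ1 hdiag hoff
  rw [← sq_sum_mul_norm_sub_norm_sum_smul_sq, ← hL] at hbound
  linarith

theorem stmt1 {H : Type*} [NormedAddCommGroup H] [InnerProductSpace ℝ H]
    {K : ℕ} (hK : 2 ≤ K) (g : Fin K → H)
    (hne : (Finset.univ.filter fun p : Fin K × Fin K => p.1 ≠ p.2).Nonempty)
    (a b : ℝ)
    (ha : a = (Finset.univ.filter fun p : Fin K × Fin K => p.1 ≠ p.2).inf' hne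
        fun p => ‖g p.1 - g p.2‖)
    (hb : b = (Finset.univ.filter fun p : Fin K × Fin K => p.1 ≠ p.2).sup' hne
        fun p => |‖g p.1‖ - ‖g p.2‖|)
    (π : Fin K → ℝ) (hπ0 : ∀ k, 0 ≤ π k) (hπ1 : ∑ k, π k = 1)
    (L : ℝ) (hL : L = ∑ k, π k * ‖g k‖) :
    ‖∑ k, π k • g k‖ ^ 2 ≤ L ^ 2 - ((a ^ 2 - b ^ 2) / 2) * ∑ k, π k * (1 - π k) :=
  stmt1_general g hne a b ha hb π hπ0 hπ1 L hL
end

section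
/- Let Γ be a K×K real symmetric positive semidefinite matrix with eigenvalues λ₁ ≥ ⋯ ≥ λ_K ≥ 0, and fix 0 ≤ s ≤ K-2. Suppose s of the vectors g₁,…,g_K in a real inner product space with Gram matrix Γ satisfy ‖g_{k_j}‖ ≤ δ for j = 1,…,s, and λ_{K-1-s}(Γ) ≥ 2(K-2)δ². Then max_{1≤k≤K} ‖g_k‖ ≥ (1/2)·√(λ_{K-1-s}(Γ)). -/
/-!
The trace of the Gram matrix is both the sum of its eigenvalues and `∑ ‖g k‖²`. The `K - 1 - s`
largest eigenvalues are all at least `λ := λ_{K-1-s}` and the others are nonnegative, so the trace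
is at least `(K - 1 - s) λ`. On the other side, the `s` small vectors contribute at most
`s δ² ≤ λ / 2` and the remaining `K - s` vectors at most `(K - s) M²`, where `M = maxₖ ‖g k‖`.
Hence `(K - s - 3/2) λ ≤ (K - s) M²`, and `K - s ≥ 2` gives `λ ≤ 4 M²`.
-/

open Finset Matrix

theorem Matrix.trace_gram_real {ι E : Type*} [Fintype ι] [NormedAddCommGroup E]
    [InnerProductSpace ℝ E] (v : ι → E) : (gram ℝ v).trace = ∑ i, ‖v i‖ ^ 2 := by
  simp [trace]

theorem Matrix.IsHermitian.sum_eigenvalues_gram_real {ι E : Type*} [Fintype ι] [DecidableEq ι]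
    [NormedAddCommGroup E] [InnerProductSpace ℝ E] {v : ι → E} (hA : (gram ℝ v).IsHermitian) :
    ∑ i, hA.eigenvalues i = ∑ i, ‖v i‖ ^ 2 := by
  simpa [trace_gram_real] using hA.trace_eq_sum_eigenvalues.symm

theorem Antitone.succ_nsmul_le_sum {M : Type*} [AddCommMonoid M] [PartialOrder M]
    [IsOrderedAddMonoid M] {K : ℕ} {f : Fin K → M} (hf : Antitone f) (hf₀ : ∀ i, 0 ≤ f i)
    (n : Fin K) : ((n : ℕ) + 1) • f n ≤ ∑ i, f i :=
  calc ((n : ℕ) + 1) • f n = #(Iic n) • f n := by rw [Fin.card_Iic]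
    _ ≤ ∑ i ∈ Iic n, f i := card_nsmul_le_sum _ _ _ fun _ hi ↦ hf (mem_Iic.mp hi)
    _ ≤ ∑ i, f i := sum_le_sum_of_subset_of_nonneg (subset_univ _) fun i _ _ ↦ hf₀ i

theorem Finset.sum_le_card_nsmul_add_card_compl_nsmul {ι M : Type*} [Fintype ι] [DecidableEq ι]
    [AddCommMonoid M] [PartialOrder M] [IsOrderedAddMonoid M] (f : ι → M) (T : Finset ι)
    {a b : M} (ha : ∀ i ∈ T, f i ≤ a) (hb : ∀ i, f i ≤ b) :
    ∑ i, f i ≤ #T • a + #Tᶜ • b := by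
  rw [← sum_add_sum_compl T f]
  exact add_le_add (sum_le_card_nsmul _ _ _ ha) (sum_le_card_nsmul _ _ _ fun i _ ↦ hb i)

theorem half_sqrt_le_of_succ_mul_le {n s δ lam M : ℝ} (hn : 0 ≤ n) (hlam : 0 ≤ lam)
    (hM : 0 ≤ M) (hδ : 2 * (n + s) * δ ^ 2 ≤ lam)
    (h : (n + 1) * lam ≤ s * δ ^ 2 + (n + 2) * M ^ 2) : 1 / 2 * √lam ≤ M := by
  have hsmall : s * δ ^ 2 ≤ lam / 2 := by nlinarith [mul_nonneg hn (sq_nonneg δ)]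
  have hkey : (n + 2) * lam ≤ (n + 2) * (2 * M) ^ 2 := by nlinarith [mul_nonneg hn hlam]
  calc 1 / 2 * √lam ≤ 1 / 2 * (2 * M) := by
        gcongr
        exact Real.sqrt_le_iff.mpr ⟨by positivity, le_of_mul_le_mul_left hkey (by positivity)⟩
    _ = M := by ring

theorem stmt4 {H : Type*} [NormedAddCommGroup H] [InnerProductSpace ℝ H]
    {K : ℕ} (hK : 2 ≤ K) (g : Fin K → H)
    (Γ : Matrix (Fin K) (Fin K) ℝ)
    (hg : ∀ i j, Γ i j = (inner ℝ (g i) (g j) : ℝ))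
    (hΓ : Γ.IsHermitian)
    (μ : Fin K → ℝ) (hμa : Antitone μ)
    (hμe : ∃ σ : Equiv.Perm (Fin K), μ = hΓ.eigenvalues ∘ σ)
    (s : ℕ) (hs : s ≤ K - 2) (δ : ℝ)
    (T : Finset (Fin K)) (hT : T.card = s) (hδ : ∀ k ∈ T, ‖g k‖ ≤ δ)
    (hlam : 2 * ((K : ℝ) - 2) * δ ^ 2 ≤ μ ⟨K - 2 - s, by omega⟩) :
    ∃ k : Fin K, (1 / 2) * Real.sqrt (μ ⟨K - 2 - s, by omega⟩) ≤ ‖g k‖ := by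
  obtain rfl : Γ = gram ℝ g := Matrix.ext hg
  obtain ⟨σ, hσ⟩ := hμe
  set n : Fin K := ⟨K - 2 - s, by omega⟩
  have : Nonempty (Fin K) := ⟨⟨0, by omega⟩⟩
  obtain ⟨k, hk⟩ := Finite.exists_max fun i ↦ ‖g i‖
  have htrace : ∑ i, μ i = ∑ i, ‖g i‖ ^ 2 := by
    rw [hσ, ← hΓ.sum_eigenvalues_gram_real]
    exact Equiv.sum_comp σ _
  have hμ₀ : ∀ i, 0 ≤ μ i := fun i ↦ hσ ▸ (posSemidef_gram ℝ g).eigenvalues_nonneg (σ i)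
  have hlow := hμa.succ_nsmul_le_sum hμ₀ n
  have hup := sum_le_card_nsmul_add_card_compl_nsmul (fun i ↦ ‖g i‖ ^ 2) T
    (fun i hi ↦ pow_le_pow_left₀ (norm_nonneg _) (hδ i hi) 2)
    (fun i ↦ pow_le_pow_left₀ (norm_nonneg _) (hk i) 2)
  have hKn : (K : ℝ) - 2 = (n : ℕ) + s := by
    rw [sub_eq_iff_eq_add]; exact_mod_cast (by simp only [n]; omega : K = _ + s + 2)
  have hcard : (#Tᶜ : ℝ) = (n : ℕ) + 2 := by
    exact_mod_cast (by rw [card_compl, hT, Fintype.card_fin]; simp only [n]; omega : #Tᶜ = _ + 2)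
  rw [hKn] at hlam
  simp only [nsmul_eq_mul, hT, hcard] at hlow hup
  push_cast at hlow
  exact ⟨k, half_sqrt_le_of_succ_mul_le n.val.cast_nonneg (hμ₀ n) (norm_nonneg _) hlam
    (by linarith)⟩
end

section
/- Let H be a real inner product space, g₁,…,g_K ∈ H, and Γ̃ the Gram matrix of the centered vectors g̃_k = g_k - (1/K)Σ_ℓ g_ℓ. Then for any π, π̃ in the probability simplex Δ_{K-1}, √(λ_{K-1}(Γ̃)) · ‖π - π̃‖₂ ≤ ‖Σ_k π_k g_k - Σ_k π̃_k g_k‖. -/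
/-!
Put `v = π - π̃`. Since `∑ v = 0`, the vector `∑ vₖ gₖ` equals `∑ vₖ g̃ₖ`, whose squared norm is
the quadratic form `vᵀ Γ̃ v`. The centered vectors sum to zero, so `Γ̃ 𝟙 = 0`, while `v ⊥ 𝟙`.
Every eigenvalue of `Γ̃` except possibly the smallest one is at least `λ_{K-1}`. When
`λ_{K-1} > 0`, the eigenvectors of these eigenvalues are orthogonal to `𝟙 ∈ ker Γ̃`, so `𝟙`
spans the remaining eigenline and `v` has no component along it. Expanding `v` in the eigenbasis
then gives `vᵀ Γ̃ v ≥ λ_{K-1} ‖v‖²`.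
-/

open Matrix WithLp
open scoped RealInnerProductSpace

section Eigenbasis

variable {E ι : Type*} [NormedAddCommGroup E] [InnerProductSpace ℝ E] [Fintype ι]
  {T : E →ₗ[ℝ] E} {b : OrthonormalBasis ι ℝ E} {eig : ι → ℝ}

theorem OrthonormalBasis.inner_map_self_eq_sum (hb : ∀ j, T (b j) = eig j • b j) (x : E) :
    ⟪T x, x⟫ = ∑ j, eig j * ⟪b j, x⟫ ^ 2 := by
  nth_rw 1 [← b.sum_repr' x]
  simp only [map_sum, map_smul, hb, smul_smul, sum_inner, real_inner_smul_left]
  exact Finset.sum_congr rfl fun j _ => by ring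

theorem LinearMap.IsSymmetric.inner_eq_zero_of_apply_eq_smul_of_apply_eq_zero
    (hT : T.IsSymmetric) {v e : E} {c : ℝ} (hv : T v = c • v) (hc : c ≠ 0) (he : T e = 0) :
    ⟪v, e⟫ = 0 := by
  have : c * ⟪v, e⟫ = 0 := by rw [← real_inner_smul_left, ← hv, hT, he, inner_zero_right]
  exact (mul_eq_zero.mp this).resolve_left hc

theorem LinearMap.IsSymmetric.eq_inner_smul_of_apply_eq_zero (hT : T.IsSymmetric)
    (hb : ∀ j, T (b j) = eig j • b j) {i₀ : ι} (heig : ∀ j ≠ i₀, eig j ≠ 0) {e : E}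
    (he : T e = 0) : e = ⟪b i₀, e⟫ • b i₀ := by
  conv_lhs => rw [← b.sum_repr' e]
  refine Finset.sum_eq_single i₀ (fun j _ hj => ?_) (by simp)
  rw [hT.inner_eq_zero_of_apply_eq_smul_of_apply_eq_zero (hb j) (heig j hj) he, zero_smul]

theorem LinearMap.IsSymmetric.mul_norm_sq_le_inner_map_self (hT : T.IsSymmetric)
    (hb : ∀ j, T (b j) = eig j • b j) {i₀ : ι} {m : ℝ} (hm : 0 < m)
    (hge : ∀ j ≠ i₀, m ≤ eig j) {e x : E} (he : T e = 0) (he0 : e ≠ 0) (hx : ⟪x, e⟫ = 0) :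
    m * ‖x‖ ^ 2 ≤ ⟪T x, x⟫ := by
  have he_eq := hT.eq_inner_smul_of_apply_eq_zero hb
    (fun j hj => (hm.trans_le (hge j hj)).ne') he
  have hx₀ : ⟪b i₀, x⟫ = 0 := by
    have hc : ⟪b i₀, e⟫ ≠ 0 := fun h => he0 (by rw [he_eq, h, zero_smul])
    rw [he_eq, real_inner_smul_right, real_inner_comm (b i₀) x] at hx
    exact (mul_eq_zero.mp hx).resolve_left hc
  rw [← b.sum_sq_inner_right, b.inner_map_self_eq_sum hb, Finset.mul_sum]
  refine Finset.sum_le_sum fun j _ => ?_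
  rcases eq_or_ne j i₀ with rfl | hj
  · simp [hx₀]
  · exact mul_le_mul_of_nonneg_right (hge j hj) (sq_nonneg _)

end Eigenbasis

theorem Matrix.IsHermitian.mul_dotProduct_self_le_dotProduct_mulVec {n : Type*} [Fintype n]
    [DecidableEq n] {A : Matrix n n ℝ} (hA : A.IsHermitian) {i₀ : n} {m : ℝ} (hm : 0 < m)
    (hge : ∀ j ≠ i₀, m ≤ hA.eigenvalues j) {e x : n → ℝ} (he : A *ᵥ e = 0) (he0 : e ≠ 0)
    (hx : x ⬝ᵥ e = 0) : m * (x ⬝ᵥ x) ≤ x ⬝ᵥ A *ᵥ x := by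
  have hT : (toEuclideanLin A).IsSymmetric := isSymmetric_toEuclideanLin_iff.mpr hA
  have hb : ∀ j, toEuclideanLin A (hA.eigenvectorBasis j) =
      hA.eigenvalues j • hA.eigenvectorBasis j := fun j =>
    congrArg (toLp 2) (hA.mulVec_eigenvectorBasis j)
  have hinner : ∀ y z : n → ℝ, ⟪toLp 2 y, toLp 2 z⟫ = y ⬝ᵥ z := fun y z => by
    rw [EuclideanSpace.inner_toLp_toLp, star_trivial, dotProduct_comm]
  have key := hT.mul_norm_sq_le_inner_map_self hb hm hge (e := toLp 2 e) (x := toLp 2 x)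
    (congrArg (toLp 2) he) (by simpa using he0) (by rwa [hinner])
  rwa [← real_inner_self_eq_norm_sq, hinner, toLpLin_toLp, hinner, toLin'_apply,
    dotProduct_comm (A *ᵥ x)] at key

theorem Antitone.exists_forall_ne_le_of_sub_two_le {ι : Type*} {K : ℕ} {μ : Fin K → ℝ}
    (hμ : Antitone μ) {eig : ι → ℝ} (σ : Fin K ≃ ι) (hσ : μ = eig ∘ σ) {i : Fin K}
    (hi : K - 2 ≤ (i : ℕ)) : ∃ i₀, ∀ j ≠ i₀, μ i ≤ eig j := by
  refine ⟨σ ⟨K - 1, by omega⟩, fun j hj => ?_⟩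
  have hlast : σ.symm j ≠ ⟨K - 1, by omega⟩ := fun h => hj (σ.symm_apply_eq.mp h)
  have hle : σ.symm j ≤ i := by
    have : (σ.symm j : ℕ) ≠ K - 1 := fun h => hlast (Fin.ext h)
    rw [Fin.le_iff_val_le_val]
    omega
  calc μ i ≤ μ (σ.symm j) := hμ hle
    _ = eig j := by simp [hσ]

section Centering

variable {H ι : Type*} [AddCommGroup H] [Module ℝ H] [Fintype ι]

theorem sum_sub_inv_card_smul_sum [Nonempty ι] (g : ι → H) :
    ∑ k, (g k - (Fintype.card ι : ℝ)⁻¹ • ∑ ℓ, g ℓ) = 0 := by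
  rw [Finset.sum_sub_distrib, Finset.sum_const, Finset.card_univ, ← Nat.cast_smul_eq_nsmul ℝ,
    smul_smul, mul_inv_cancel₀ (by exact_mod_cast Fintype.card_ne_zero), one_smul, sub_self]

theorem sum_smul_sub_of_sum_eq_zero {c : ι → ℝ} (hc : ∑ k, c k = 0) (g : ι → H) (a : H) :
    ∑ k, c k • (g k - a) = ∑ k, c k • g k := by
  simp only [smul_sub, Finset.sum_sub_distrib, ← Finset.sum_smul, hc, zero_smul, sub_zero]

end Centering

section Gram

variable {E n : Type*} [NormedAddCommGroup E] [InnerProductSpace ℝ E] [Fintype n]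

theorem Matrix.dotProduct_gram_mulVec_self (v : n → E) (x : n → ℝ) :
    x ⬝ᵥ gram ℝ v *ᵥ x = ‖∑ i, x i • v i‖ ^ 2 := by
  simpa [real_inner_self_eq_norm_sq] using star_dotProduct_gram_mulVec v x x

theorem Matrix.gram_mulVec_one_eq_zero {v : n → E} (hv : ∑ i, v i = 0) : gram ℝ v *ᵥ 1 = 0 := by
  ext i
  simp [mulVec, dotProduct, gram_apply, ← inner_sum, hv]

end Gram

theorem stmt10 {H : Type*} [NormedAddCommGroup H] [InnerProductSpace ℝ H]
    {K : ℕ} (hK : 0 < K) (g : Fin K → H)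
    (gt : Fin K → H) (hgt : ∀ k, gt k = g k - (K : ℝ)⁻¹ • ∑ ℓ, g ℓ)
    (Γt : Matrix (Fin K) (Fin K) ℝ)
    (hΓt : ∀ i j, Γt i j = (inner ℝ (gt i) (gt j) : ℝ))
    (hH : Γt.IsHermitian)
    (μ : Fin K → ℝ) (hμa : Antitone μ)
    (hμe : ∃ σ : Equiv.Perm (Fin K), μ = hH.eigenvalues ∘ σ)
    (π πt : Fin K → ℝ)
    (hπ1 : ∑ k, π k = 1)
    (hπt1 : ∑ k, πt k = 1) :
    Real.sqrt (μ ⟨K - 2, by omega⟩) * Real.sqrt (∑ k, (π k - πt k) ^ 2)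
      ≤ ‖(∑ k, π k • g k) - ∑ k, πt k • g k‖ := by
  have : Nonempty (Fin K) := Fin.pos_iff_nonempty.mp hK
  have hΓ : Γt = gram ℝ gt := Matrix.ext hΓt
  have hgt_sum : ∑ k, gt k = 0 := by simpa [hgt] using sum_sub_inv_card_smul_sum g
  have hv : ∑ k, (π - πt) k = 0 := by simp [Finset.sum_sub_distrib, hπ1, hπt1]
  have hw : (∑ k, π k • g k) - ∑ k, πt k • g k = ∑ k, (π - πt) k • gt k := by
    calc (∑ k, π k • g k) - ∑ k, πt k • g k = ∑ k, (π - πt) k • g k := by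
          simp only [Pi.sub_apply, sub_smul, Finset.sum_sub_distrib]
      _ = ∑ k, (π - πt) k • gt k := by simp only [hgt, sum_smul_sub_of_sum_eq_zero hv]
  obtain ⟨σ, hσ⟩ := hμe
  obtain ⟨i₀, hi₀⟩ := hμa.exists_forall_ne_le_of_sub_two_le σ hσ
    (i := ⟨K - 2, by omega⟩) le_rfl
  rcases le_or_gt (μ ⟨K - 2, by omega⟩) 0 with hm | hm
  · rw [Real.sqrt_eq_zero'.mpr hm, zero_mul]
    exact norm_nonneg _
  have key := hH.mul_dotProduct_self_le_dotProduct_mulVec hm hi₀ (e := 1) (x := π - πt)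
    (hΓ ▸ gram_mulVec_one_eq_zero hgt_sum) one_ne_zero (by rw [dotProduct_one]; exact hv)
  rw [hΓ, dotProduct_gram_mulVec_self, ← hw] at key
  rw [← Real.sqrt_mul hm.le, ← Real.sqrt_sq (norm_nonneg _)]
  exact Real.sqrt_le_sqrt (by simpa [dotProduct, sq] using key)
end
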